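/- arXiv:math/0606044 — 3 statements merged into one kernel-verified Lean document; each statement's English description precedes it below -/
import Mathlib

section
/- With notation as in the down operation: if λ is an e-restricted partition and U(J) ≠ ∅, then down(λ) is again e-restricted, and moreover the first part of down(λ) equals the first part of λ (i.e. a(down(λ)) = a(λ)). -/
/-- A partition: a weakly decreasing, eventually zero sequence of naturals. -/
structure Partition' where
  parts : ℕ → ℕ
  antitone : ∀ k, parts (k + 1) ≤ parts k
  eventually_zero : ∃ N, ∀ k, N ≤ k → parts k = 0

/-- A partition is `e`-restricted if consecutive parts differ by less than `e`. -/
def eRestricted (e : ℕ) (l : Partition') : Prop :=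
  ∀ k, l.parts k < l.parts (k + 1) + e

/-- The set of beta numbers of charge `m` of a partition. -/
def betaSet (l : Partition') (m : ℤ) : Set ℤ :=
  {x | ∃ k : ℕ, x = (l.parts k : ℤ) + m - k}

/-- `U(J)`: the beads that can be slid up by one on their runner. -/
def USet (e : ℕ) (J : Set ℤ) : Set ℤ :=
  {x | x ∈ J ∧ x - (e : ℤ) ∉ J}

lemma parts_anti (l : Partition') : Antitone l.parts :=
  antitone_nat_of_succ_le l.antitone

lemma beta_le (l : Partition') (m : ℤ) {j k : ℕ} (h : j ≤ k) :
    (l.parts k : ℤ) + m - k ≤ (l.parts j : ℤ) + m - j := by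
  have h1 : l.parts k ≤ l.parts j := parts_anti l h
  omega

/-- Lemma 2.6(2),(3): `down(λ)` is again `e`-restricted,
and its first part agrees with that of `λ`. -/
theorem down_eRestricted_and_firstPart (e : ℕ) (he : 2 ≤ e) (m : ℤ)
    (lam mu : Partition') (hres : eRestricted e lam)
    (p' q' : ℤ)
    (hp : IsLeast (USet e (betaSet lam m)) p')
    (hq : IsLeast ({x : ℤ | p' - (e : ℤ) < x ∧ x ∈ betaSet lam m ∧
      x + (e : ℤ) ∉ betaSet lam m} ∪ {p'}) q')
    (hmu : betaSet mu m = (betaSet lam m \ {q'}) ∪ {p' - (e : ℤ)}) :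
    eRestricted e mu ∧ mu.parts 0 = lam.parts 0 := by
  obtain ⟨⟨hpJ, hpeJ⟩, hpmin⟩ := hp
  obtain ⟨hq1, hq2⟩ := hq
  have hqp : q' ≤ p' := hq2 (Or.inr rfl)
  have hqJ : q' ∈ betaSet lam m ∧ p' - (e : ℤ) < q' := by
    rcases hq1 with h | h
    · exact ⟨h.2.1, h.1⟩
    · rw [Set.mem_singleton_iff] at h; subst h; exact ⟨hpJ, by omega⟩
  have hWmin : ∀ z : ℤ, p' - (e : ℤ) < z → z ∈ betaSet lam m →
      z + (e : ℤ) ∉ betaSet lam m → q' ≤ z :=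
    fun z h1 h2 h3 => hq2 (Or.inl ⟨h1, h2, h3⟩)
  -- every beta number is at most c0 := lam.parts 0 + m
  have memJ_le : ∀ x ∈ betaSet lam m, x ≤ (lam.parts 0 : ℤ) + m := by
    rintro x ⟨k, rfl⟩
    have := beta_le lam m (Nat.zero_le k)
    omega
  -- consecutive gaps in lam's beta set are at most e
  have hgap : ∀ k : ℕ, (lam.parts k : ℤ) + m - k ≤
      ((lam.parts (k+1) : ℤ) + m - (k+1 : ℕ)) + e := by
    intro k
    have := hres k
    omega
  have hc0J : (lam.parts 0 : ℤ) + m ∈ betaSet lam m := ⟨0, by push_cast; ring⟩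
  -- q' is not the largest beta number
  have hq_lt_c0 : q' < (lam.parts 0 : ℤ) + m := by
    by_contra hcon
    push_neg at hcon
    have h1 : q' ≤ (lam.parts 0 : ℤ) + m := memJ_le q' hqJ.1
    have hqc0 : q' = (lam.parts 0 : ℤ) + m := le_antisymm h1 hcon
    have hpc0 : p' = (lam.parts 0 : ℤ) + m :=
      le_antisymm (memJ_le p' hpJ) (by omega)
    have hc1J : (lam.parts 1 : ℤ) + m - (1 : ℕ) ∈ betaSet lam m := ⟨1, rfl⟩
    have hc1lt : (lam.parts 1 : ℤ) + m - (1 : ℕ) < (lam.parts 0 : ℤ) + m := by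
      have := parts_anti lam (Nat.zero_le 1)
      push_cast
      omega
    have hc1ge : (lam.parts 0 : ℤ) + m ≤ ((lam.parts 1 : ℤ) + m - (1 : ℕ)) + e := by
      have h0 : lam.parts 0 < lam.parts 1 + e := hres 0
      push_cast
      omega
    have hc1ne : (lam.parts 1 : ℤ) + m - (1 : ℕ) ≠ p' - e := by
      intro h; exact hpeJ (h ▸ hc1J)
    have hc1e : ((lam.parts 1 : ℤ) + m - (1 : ℕ)) + e ∉ betaSet lam m := by
      intro h
      have := memJ_le _ h
      push_cast at this hc1ne ⊢
      omega
    have := hWmin _ (by push_cast at hc1ne ⊢; omega) hc1J hc1e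
    push_cast at this
    omega
  -- the key claim: in the new beta set, every non-maximal element has a
  -- successor within distance e
  have key : ∀ x ∈ betaSet mu m, x < (lam.parts 0 : ℤ) + m →
      ∃ y ∈ betaSet mu m, x < y ∧ y ≤ x + e := by
    intro x hx hxlt
    rw [hmu] at hx ⊢
    rcases hx with ⟨hxJ, hxq⟩ | hxpe
    · -- x ∈ J, x ≠ q'
      rw [Set.mem_singleton_iff] at hxq
      obtain ⟨j, hj⟩ := hxJ
      have hj0 : j ≠ 0 := by
        rintro rfl
        push_cast at hj
        omega
      obtain ⟨i, rfl⟩ := Nat.exists_eq_succ_of_ne_zero hj0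
      simp only [Nat.succ_eq_add_one] at hj
      -- y0 = previous beta number
      set y0 : ℤ := (lam.parts i : ℤ) + m - i with hy0def
      have hy0J : y0 ∈ betaSet lam m := ⟨i, rfl⟩
      have hxy0 : x < y0 := by
        have := lam.antitone i
        omega
      have hy0le : y0 ≤ x + e := by
        have := hgap i
        omega
      by_cases hy0q : y0 = q'
      · -- the previous beta number is exactly q', which gets removed
        have hxJ' : x ∈ betaSet lam m := ⟨i + 1, hj⟩
        by_cases hxp : p' - (e : ℤ) < x
        · -- then x + e must still be a beta number
          have hxe : x + (e : ℤ) ∈ betaSet lam m := by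
            by_contra h
            have := hWmin x hxp hxJ' h
            omega
          refine ⟨x + e, Or.inl ⟨hxe, ?_⟩, by omega, le_refl _⟩
          rw [Set.mem_singleton_iff]
          intro h
          omega
        · -- x is below p' - e, so p' - e itself works
          push_neg at hxp
          have hxne : x ≠ p' - (e : ℤ) := by
            intro h; exact hpeJ (h ▸ hxJ')
          refine ⟨p' - e, Or.inr rfl, by omega, ?_⟩
          have := hqJ.2
          omega
      · exact ⟨y0, Or.inl ⟨hy0J, hy0q⟩, hxy0, hy0le⟩
    · -- x = p' - e
      rw [Set.mem_singleton_iff] at hxpe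
      subst hxpe
      by_cases hpq : p' = q'
      · -- p' is removed; use the beta number just below p'
        obtain ⟨k, hk⟩ := hpJ
        set y : ℤ := (lam.parts (k+1) : ℤ) + m - (k+1 : ℕ) with hydef
        have hyJ : y ∈ betaSet lam m := ⟨k + 1, rfl⟩
        have hylt : y < p' := by
          have := lam.antitone k
          omega
        have hyge : p' ≤ y + e := by
          have := hgap k
          omega
        have hyne : y ≠ p' - (e : ℤ) := by
          intro h; exact hpeJ (h ▸ hyJ)
        refine ⟨y, Or.inl ⟨hyJ, ?_⟩, by omega, by omega⟩
        rw [Set.mem_singleton_iff]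
        omega
      · refine ⟨p', Or.inl ⟨hpJ, ?_⟩, by omega, by omega⟩
        rw [Set.mem_singleton_iff]
        exact hpq
  -- the first beta number of mu equals that of lam
  have hd0 : (mu.parts 0 : ℤ) + m = (lam.parts 0 : ℤ) + m := by
    have h1 : (mu.parts 0 : ℤ) + m - ((0 : ℕ) : ℤ) ∈ betaSet mu m := ⟨0, rfl⟩
    rw [hmu] at h1
    have hle1 : (mu.parts 0 : ℤ) + m ≤ (lam.parts 0 : ℤ) + m := by
      rcases h1 with ⟨hJ, _⟩ | hpe
      · have := memJ_le _ hJ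
        omega
      · rw [Set.mem_singleton_iff] at hpe
        have := memJ_le p' hpJ
        omega
    have h2 : (lam.parts 0 : ℤ) + m ∈ betaSet mu m := by
      rw [hmu]
      exact Or.inl ⟨hc0J, by rw [Set.mem_singleton_iff]; omega⟩
    obtain ⟨k, hk⟩ := h2
    have := beta_le mu m (Nat.zero_le k)
    omega
  constructor
  · intro k
    have hx : (mu.parts (k+1) : ℤ) + m - ((k+1 : ℕ) : ℤ) ∈ betaSet mu m := ⟨k + 1, rfl⟩
    have hxlt : (mu.parts (k+1) : ℤ) + m - ((k+1 : ℕ) : ℤ) < (lam.parts 0 : ℤ) + m := by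
      have h1 : mu.parts (k+1) ≤ mu.parts 0 := parts_anti mu (Nat.zero_le _)
      push_cast
      omega
    obtain ⟨y, hy, hlt, hle⟩ := key _ hx hxlt
    obtain ⟨j, hj⟩ := hy
    have hjk : j ≤ k := by
      by_contra h
      push_neg at h
      have h5 : (mu.parts j : ℤ) + m - (j : ℤ) ≤
          (mu.parts (k+1) : ℤ) + m - ((k+1 : ℕ) : ℤ) := beta_le mu m h
      omega
    have h2 : (mu.parts k : ℤ) + m - (k : ℤ) ≤ y := by
      rw [hj]; exact beta_le mu m hjk
    omega
  · omega
end

section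
/- Iterating the down operation on any e-restricted partition λ terminates after finitely many steps, since |down(λ)| < |λ| whenever U(J) ≠ ∅; the resulting partition base(λ) is an e-core. -/
/-- One application of the down operation, as a relation on partitions. -/
def DownStep (e : ℕ) (m : ℤ) (l l' : Partition') : Prop :=
  ∃ p' q' : ℤ,
    IsLeast (USet e (betaSet l m)) p' ∧
    IsLeast ({x : ℤ | p' - (e : ℤ) < x ∧ x ∈ betaSet l m ∧
      x + (e : ℤ) ∉ betaSet l m} ∪ {p'}) q' ∧
    betaSet l' m = (betaSet l m \ {q'}) ∪ {p' - (e : ℤ)}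

/-- The number of boxes of a partition. -/
noncomputable def psize (l : Partition') : ℕ := Set.ncard {pr : ℕ × ℕ | pr.2 < l.parts pr.1}

namespace DownAux

/-- The beta sequence of a partition. -/
def beta (l : Partition') (m : ℤ) : ℕ → ℤ := fun k => (l.parts k : ℤ) + m - k

lemma beta_succ_lt (l : Partition') (m : ℤ) (k : ℕ) : beta l m (k + 1) < beta l m k := by
  have := l.antitone k
  simp only [beta]
  push_cast
  omega

lemma beta_strictAnti (l : Partition') (m : ℤ) : StrictAnti (beta l m) :=
  strictAnti_nat_of_succ_lt (beta_succ_lt l m)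

lemma betaSet_eq_range (l : Partition') (m : ℤ) : betaSet l m = Set.range (beta l m) := by
  ext x
  simp only [betaSet, Set.mem_setOf_eq, Set.mem_range, beta]
  exact exists_congr fun k => eq_comm

lemma mem_betaSet_of_le (l : Partition') (m : ℤ) (N : ℕ) (hN : ∀ k, N ≤ k → l.parts k = 0)
    (x : ℤ) (hx : x ≤ m - N) : x ∈ betaSet l m := by
  refine ⟨(m - x).toNat, ?_⟩
  have h1 : (N : ℤ) ≤ m - x := by omega
  have h2 : N ≤ (m - x).toNat := by omega
  rw [hN _ h2]
  omega

/-- Build a partition from a strictly decreasing eventually-staircase sequence. -/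
def ofBeta (m : ℤ) (β : ℕ → ℤ) (hmono : ∀ k, β (k + 1) < β k) (N : ℕ)
    (hst : ∀ k, N ≤ k → β k = m - k) : Partition' where
  parts k := (β k + k - m).toNat
  antitone k := by
    have := hmono k
    push_cast
    omega
  eventually_zero := ⟨N, fun k hk => by have := hst k hk; omega⟩

lemma ofBeta_m_le (m : ℤ) (β : ℕ → ℤ) (hmono : ∀ k, β (k + 1) < β k) (N : ℕ)
    (hst : ∀ k, N ≤ k → β k = m - k) (k : ℕ) : m ≤ β k + k := by
  have ga : Antitone (fun k : ℕ => β k + k) := by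
    apply antitone_nat_of_succ_le
    intro n
    have := hmono n
    push_cast
    omega
  have h1 : (fun k : ℕ => β k + k) (max k N) ≤ β k + k := ga (le_max_left _ _)
  have h2 : β (max k N) = m - (max k N) := hst _ (le_max_right _ _)
  simp only [h2] at h1
  omega

lemma ofBeta_parts_cast (m : ℤ) (β : ℕ → ℤ) (hmono : ∀ k, β (k + 1) < β k) (N : ℕ)
    (hst : ∀ k, N ≤ k → β k = m - k) (k : ℕ) :
    ((ofBeta m β hmono N hst).parts k : ℤ) = β k + k - m := by
  have := ofBeta_m_le m β hmono N hst k
  simp only [ofBeta]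
  omega

lemma betaSet_ofBeta (m : ℤ) (β : ℕ → ℤ) (hmono : ∀ k, β (k + 1) < β k) (N : ℕ)
    (hst : ∀ k, N ≤ k → β k = m - k) :
    betaSet (ofBeta m β hmono N hst) m = Set.range β := by
  ext x
  simp only [betaSet, Set.mem_setOf_eq, Set.mem_range]
  constructor
  · rintro ⟨k, rfl⟩
    exact ⟨k, by rw [ofBeta_parts_cast m β hmono N hst k]; ring⟩
  · rintro ⟨k, rfl⟩
    exact ⟨k, by rw [ofBeta_parts_cast m β hmono N hst k]; ring⟩

/-- Partitions with the same beta set (same charge) have the same parts. -/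
lemma parts_eq_of_betaSet_eq (l l' : Partition') (m : ℤ) (h : betaSet l m = betaSet l' m) :
    l.parts = l'.parts := by
  have h1 : StrictMono (fun k => -(beta l m k)) := fun a b hab => by
    simpa using beta_strictAnti l m hab
  have h2 : StrictMono (fun k => -(beta l' m k)) := fun a b hab => by
    simpa using beta_strictAnti l' m hab
  have hr : Set.range (fun k => -(beta l m k)) = Set.range (fun k => -(beta l' m k)) := by
    have : Set.range (beta l m) = Set.range (beta l' m) := by
      rw [← betaSet_eq_range, ← betaSet_eq_range, h]
    rw [show (fun k => -(beta l m k)) = (fun x => -x) ∘ (beta l m) from rfl,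
      show (fun k => -(beta l' m k)) = (fun x => -x) ∘ (beta l' m) from rfl,
      Set.range_comp, Set.range_comp, this]
  have := (h1.range_inj h2).mp hr
  funext k
  have hk := congrFun this k
  simp only [beta, neg_inj] at hk
  omega

lemma psize_congr (l l' : Partition') (h : l.parts = l'.parts) : psize l = psize l' := by
  simp only [psize, h]

lemma psize_eq_sum (l : Partition') (M : ℕ) (hM : ∀ k, M ≤ k → l.parts k = 0) :
    psize l = ∑ k ∈ Finset.range M, l.parts k := by
  have hset : {pr : ℕ × ℕ | pr.2 < l.parts pr.1} =
      ↑((Finset.range M).biUnion fun k => {k} ×ˢ Finset.range (l.parts k)) := by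
    ext ⟨a, b⟩
    simp only [Set.mem_setOf_eq, Finset.coe_biUnion, Set.mem_iUnion, Finset.mem_coe,
      Finset.mem_biUnion, Finset.mem_range, Finset.mem_product, Finset.mem_singleton]
    constructor
    · intro hb
      refine ⟨a, ?_, rfl, hb⟩
      by_contra hc
      rw [hM a (by omega)] at hb
      omega
    · rintro ⟨k, _, rfl, hb⟩
      exact hb
  rw [psize, hset, Set.ncard_coe_finset, Finset.card_biUnion]
  · apply Finset.sum_congr rfl
    intro k _
    simp [Finset.card_product]
  · intro x _ y _ hxy
    simp only [Finset.disjoint_left, Finset.mem_product, Finset.mem_singleton]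
    rintro ⟨a, b⟩ ⟨rfl, _⟩ ⟨h2, _⟩
    exact hxy h2

lemma sum_skip (f : ℕ → ℤ) (i d : ℕ) :
    (∑ k ∈ Finset.range (i + d), if k < i then f k else f (k + 1)) =
      (∑ k ∈ Finset.range (i + d + 1), f k) - f i := by
  induction d with
  | zero =>
    rw [Nat.add_zero, Finset.sum_range_succ]
    have : ∀ k ∈ Finset.range i, (if k < i then f k else f (k + 1)) = f k := by
      intro k hk
      rw [if_pos (Finset.mem_range.mp hk)]
    rw [Finset.sum_congr rfl this]
    ring
  | succ d ih =>
    have h2 : ∑ k ∈ Finset.range (i + (d + 1) + 1), f k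
        = (∑ k ∈ Finset.range (i + d + 1), f k) + f (i + d + 1) := by
      rw [show i + (d + 1) + 1 = (i + d + 1) + 1 by omega, Finset.sum_range_succ]
    have h3 : (∑ k ∈ Finset.range (i + (d + 1)), if k < i then f k else f (k + 1))
        = (∑ k ∈ Finset.range (i + d), if k < i then f k else f (k + 1)) + f (i + d + 1) := by
      rw [show i + (d + 1) = (i + d) + 1 by omega, Finset.sum_range_succ, if_neg (by omega)]
    rw [h3, ih, h2]
    ring

end DownAux
namespace DownAux

lemma key (e : ℕ) (he : 2 ≤ e) (m : ℤ) (lam : Partition')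
    (hU : (USet e (betaSet lam m)).Nonempty) :
    ∃ mu : Partition', DownStep e m lam mu ∧ psize mu < psize lam := by
  classical
  obtain ⟨N, hN⟩ := lam.eventually_zero
  -- the least element p' of U
  have hbdd : ∀ z : ℤ, z ∈ USet e (betaSet lam m) → m - N + 1 + e ≤ z := by
    intro z hz
    by_contra hc
    exact hz.2 (mem_betaSet_of_le lam m N hN _ (by omega))
  obtain ⟨p', hp'mem, hp'min⟩ := Int.exists_least_of_bdd ⟨m - N + 1 + e, hbdd⟩ hU
  have hp'least : IsLeast (USet e (betaSet lam m)) p' := ⟨hp'mem, hp'min⟩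
  have hp'S : p' ∈ betaSet lam m := hp'mem.1
  have hpeS : p' - (e : ℤ) ∉ betaSet lam m := hp'mem.2
  -- the least element q'
  have hTbdd : ∀ z : ℤ, z ∈ ({x : ℤ | p' - (e : ℤ) < x ∧ x ∈ betaSet lam m ∧
      x + (e : ℤ) ∉ betaSet lam m} ∪ {p'}) → p' - e + 1 ≤ z := by
    rintro z (⟨h1, _, _⟩ | h1)
    · omega
    · have : z = p' := h1
      omega
  obtain ⟨q', hq'mem, hq'min⟩ := Int.exists_least_of_bdd ⟨p' - e + 1, hTbdd⟩ ⟨p', Or.inr rfl⟩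
  have hq'least : IsLeast ({x : ℤ | p' - (e : ℤ) < x ∧ x ∈ betaSet lam m ∧
      x + (e : ℤ) ∉ betaSet lam m} ∪ {p'}) q' := ⟨hq'mem, hq'min⟩
  have hq'S : q' ∈ betaSet lam m := by
    rcases hq'mem with h | h
    · exact h.2.1
    · have : q' = p' := h
      rw [this]; exact hp'S
  have hq'gt : p' - (e : ℤ) < q' := by
    rcases hq'mem with h | h
    · exact h.1
    · have : q' = p' := h
      omega
  -- the beta sequence
  set β := beta lam m with hβ
  have hrange : betaSet lam m = Set.range β := betaSet_eq_range lam m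
  have hanti : StrictAnti β := beta_strictAnti lam m
  have hinj : Function.Injective β := hanti.injective
  have hstair : ∀ k, N ≤ k → β k = m - k := by
    intro k hk
    simp [hβ, beta, hN k hk]
  obtain ⟨i, hi⟩ : ∃ i, β i = q' := by
    rw [hrange] at hq'S
    exact hq'S
  have hpe_not : ∀ k : ℕ, β k ≠ p' - (e : ℤ) := by
    intro k hk
    exact hpeS (by rw [hrange]; exact ⟨k, hk⟩)
  -- the insertion point j
  have hub : ∀ k : ℕ, β k + k ≤ β 0 := by
    intro k
    have ga : Antitone (fun k : ℕ => β k + k) := by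
      apply antitone_nat_of_succ_le
      intro n
      have h1 : β (n + 1) < β n := hanti (by omega)
      push_cast
      omega
    simpa using ga (Nat.zero_le k)
  have hex : ∃ k, β k < p' - e := by
    refine ⟨(β 0 - (p' - e) + 1).toNat, ?_⟩
    have h1 := hub (β 0 - (p' - e) + 1).toNat
    omega
  set j := Nat.find hex with hj
  have hjs : β j < p' - e := Nat.find_spec hex
  have hjm : ∀ k, k < j → p' - e < β k := by
    intro k hk
    have h1 : ¬ β k < p' - e := Nat.find_min hex hk
    have h2 := hpe_not k
    omega
  have hji : i < j := by
    by_contra hc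
    have : β i ≤ β j := hanti.antitone (by omega)
    have := hjm 0 (by omega)
    omega
  -- the new beta sequence
  set β' : ℕ → ℤ := fun k =>
    if k < i then β k else if k + 1 < j then β (k + 1) else if k + 1 = j then p' - e else β k
    with hβ'
  have hb1 : ∀ k, k < i → β' k = β k := by
    intro k hk; simp only [hβ']; rw [if_pos hk]
  have hb2 : ∀ k, i ≤ k → k + 1 < j → β' k = β (k + 1) := by
    intro k hk1 hk2; simp only [hβ']; rw [if_neg (by omega), if_pos hk2]
  have hb3 : ∀ k, i ≤ k → k + 1 = j → β' k = p' - e := by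
    intro k hk1 hk2; simp only [hβ']; rw [if_neg (by omega), if_neg (by omega), if_pos hk2]
  have hb4 : ∀ k, j ≤ k → β' k = β k := by
    intro k hk; simp only [hβ']
    rw [if_neg (by omega), if_neg (by omega), if_neg (by omega)]
  -- strict decrease
  have hmono : ∀ k, β' (k + 1) < β' k := by
    intro k
    by_cases h1 : k + 1 < i
    · rw [hb1 _ h1, hb1 _ (by omega)]
      exact hanti (Nat.lt_succ_self k)
    · by_cases h2 : k + 1 = i
      · rw [hb1 k (by omega)]
        by_cases h3 : i + 1 < j
        · rw [hb2 (k + 1) (by omega) (by omega)]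
          exact hanti (by omega)
        · rw [hb3 (k + 1) (by omega) (by omega)]
          exact hjm k (by omega)
      · have hik : i ≤ k := by omega
        by_cases h4 : k + 1 + 1 < j
        · rw [hb2 k hik (by omega), hb2 (k + 1) (by omega) h4]
          exact hanti (by omega)
        · by_cases h5 : k + 1 + 1 = j
          · rw [hb2 k hik (by omega), hb3 (k + 1) (by omega) h5]
            exact hjm (k + 1) (by omega)
          · by_cases h6 : k + 1 = j
            · rw [hb3 k hik h6, hb4 (k + 1) (by omega), h6]
              exact hjs
            · rw [hb4 k (by omega), hb4 (k + 1) (by omega)]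
              exact hanti (Nat.lt_succ_self k)
  -- eventual staircase
  have hstair' : ∀ k, max N j ≤ k → β' k = m - k := by
    intro k hk
    rw [hb4 k (by omega)]
    exact hstair k (by omega)
  -- the new partition
  refine ⟨ofBeta m β' hmono (max N j) hstair', ?_, ?_⟩
  · -- DownStep
    refine ⟨p', q', hp'least, hq'least, ?_⟩
    rw [betaSet_ofBeta, hrange]
    ext x
    simp only [Set.mem_range, Set.mem_union, Set.mem_diff, Set.mem_singleton_iff]
    constructor
    · rintro ⟨k, rfl⟩
      by_cases h1 : k < i
      · rw [hb1 k h1]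
        exact Or.inl ⟨⟨k, rfl⟩, fun hc => by have := hinj (hi ▸ hc); omega⟩
      · by_cases h2 : k + 1 < j
        · rw [hb2 k (by omega) h2]
          exact Or.inl ⟨⟨k + 1, rfl⟩, fun hc => by have := hinj (hi ▸ hc); omega⟩
        · by_cases h3 : k + 1 = j
          · rw [hb3 k (by omega) h3]
            exact Or.inr rfl
          · rw [hb4 k (by omega)]
            exact Or.inl ⟨⟨k, rfl⟩, fun hc => by have := hinj (hi ▸ hc); omega⟩
    · rintro (⟨⟨k, rfl⟩, hxq⟩ | hx)
      · have hki : k ≠ i := fun h => hxq (by rw [h, hi])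
        by_cases h1 : k < i
        · exact ⟨k, hb1 k h1⟩
        · by_cases h2 : k < j
          · refine ⟨k - 1, ?_⟩
            rw [hb2 (k - 1) (by omega) (by omega), show k - 1 + 1 = k by omega]
          · exact ⟨k, hb4 k (by omega)⟩
      · refine ⟨j - 1, ?_⟩
        rw [hb3 (j - 1) (by omega) (by omega), hx]
  · -- psize decreases
    set M := max N j with hM
    have hMj : j ≤ M := le_max_right _ _
    have hplam : psize lam = ∑ k ∈ Finset.range M, lam.parts k :=
      psize_eq_sum lam M (fun k hk => hN k (by omega))
    have hpmu : psize (ofBeta m β' hmono M hstair') = ∑ k ∈ Finset.range M,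
        (ofBeta m β' hmono M hstair').parts k :=
      psize_eq_sum _ M (fun k hk => by
        have h1 := hstair' k hk
        have h2 := ofBeta_parts_cast m β' hmono M hstair' k
        omega)
    -- the sum identity
    have hsum : ∀ K, j ≤ K → ∑ k ∈ Finset.range K, β' k
        = (∑ k ∈ Finset.range K, β k) - q' + (p' - e) := by
      intro K hK
      induction K, hK using Nat.le_induction with
      | base =>
        obtain ⟨j1, hj1⟩ : ∃ j1, j = j1 + 1 := ⟨j - 1, by omega⟩
        rw [hj1, Finset.sum_range_succ, Finset.sum_range_succ,
          hb3 j1 (by omega) (by omega)]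
        have hcong : ∀ k ∈ Finset.range j1,
            β' k = if k < i then β k else β (k + 1) := by
          intro k hk
          rw [Finset.mem_range] at hk
          by_cases h1 : k < i
          · rw [hb1 k h1, if_pos h1]
          · rw [hb2 k (by omega) (by omega), if_neg h1]
        have hC : ∑ k ∈ Finset.range j1, (if k < i then β k else β (k + 1))
            = (∑ k ∈ Finset.range (j1 + 1), β k) - β i := by
          have hs := sum_skip β i (j1 - i)
          rwa [show i + (j1 - i) = j1 by omega] at hs
        rw [Finset.sum_congr rfl hcong, hC, Finset.sum_range_succ, hi]
        try ring
      | succ K hK ih =>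
        rw [Finset.sum_range_succ, Finset.sum_range_succ, ih, hb4 K (by omega)]
        ring
    have hslt : ∑ k ∈ Finset.range M, β' k < ∑ k ∈ Finset.range M, β k := by
      rw [hsum M hMj]
      omega
    -- cast and conclude
    have hcast : ((psize (ofBeta m β' hmono M hstair')) : ℤ) < (psize lam : ℤ) := by
      rw [hplam, hpmu]
      push_cast
      have e1 : ∀ k ∈ Finset.range M, ((ofBeta m β' hmono M hstair').parts k : ℤ)
          = β' k + k - m := fun k _ => ofBeta_parts_cast m β' hmono M hstair' k
      have e2 : ∀ k ∈ Finset.range M, ((lam.parts k : ℤ)) = β k + k - m := by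
        intro k _
        simp only [hβ, beta]
        ring
      rw [Finset.sum_congr rfl e1, Finset.sum_congr rfl e2]
      have h3 : ∑ k ∈ Finset.range M, (β' k + (k : ℤ) - m)
          = (∑ k ∈ Finset.range M, β' k) + ∑ k ∈ Finset.range M, ((k : ℤ) - m) := by
        rw [← Finset.sum_add_distrib]
        apply Finset.sum_congr rfl
        intro k _
        ring
      have h4 : ∑ k ∈ Finset.range M, (β k + (k : ℤ) - m)
          = (∑ k ∈ Finset.range M, β k) + ∑ k ∈ Finset.range M, ((k : ℤ) - m) := by
        rw [← Finset.sum_add_distrib]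
        apply Finset.sum_congr rfl
        intro k _
        ring
      rw [h3, h4]
      omega
    exact_mod_cast hcast

end DownAux

open DownAux

/-- Iterating the down operation terminates: each down step strictly decreases
the number of boxes, and from any `e`-restricted partition there is a finite
chain of down steps reaching a partition with `U(J) = ∅`, i.e. an `e`-core. -/
theorem down_terminates_in_core (e : ℕ) (he : 2 ≤ e) (m : ℤ)
    (lam : Partition') (hres : eRestricted e lam) :
    (∀ mu : Partition', DownStep e m lam mu → psize mu < psize lam) ∧
    ∃ (N : ℕ) (f : ℕ → Partition'), f 0 = lam ∧
      (∀ k < N, DownStep e m (f k) (f (k + 1))) ∧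
      USet e (betaSet (f N) m) = ∅ ∧
      (∀ x ∈ betaSet (f N) m, x - (e : ℤ) ∈ betaSet (f N) m) := by
  constructor
  · intro mu hmu
    obtain ⟨p, q, hp, hq, hS⟩ := hmu
    obtain ⟨mu0, hd0, hlt⟩ := key e he m lam ⟨p, hp.1⟩
    obtain ⟨p0, q0, hp0, hq0, hS0⟩ := hd0
    have hpp : p = p0 := hp.unique hp0
    subst hpp
    have hqq : q = q0 := hq.unique hq0
    subst hqq
    have hbe : betaSet mu m = betaSet mu0 m := by rw [hS, hS0]
    rw [psize_congr mu mu0 (parts_eq_of_betaSet_eq mu mu0 m hbe)]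
    exact hlt
  · have hdone : ∀ l : Partition', USet e (betaSet l m) = ∅ →
        ∃ (N : ℕ) (f : ℕ → Partition'), f 0 = l ∧
        (∀ k < N, DownStep e m (f k) (f (k + 1))) ∧
        USet e (betaSet (f N) m) = ∅ ∧
        (∀ x ∈ betaSet (f N) m, x - (e : ℤ) ∈ betaSet (f N) m) := by
      intro l hUe
      refine ⟨0, fun _ => l, rfl, fun k hk => absurd hk (by omega), hUe, ?_⟩
      intro x hx
      by_contra hc
      have hmem : x ∈ USet e (betaSet l m) := ⟨hx, hc⟩
      rw [hUe] at hmem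
      exact hmem
    suffices H : ∀ n (l : Partition'), psize l ≤ n →
        ∃ (N : ℕ) (f : ℕ → Partition'), f 0 = l ∧
        (∀ k < N, DownStep e m (f k) (f (k + 1))) ∧
        USet e (betaSet (f N) m) = ∅ ∧
        (∀ x ∈ betaSet (f N) m, x - (e : ℤ) ∈ betaSet (f N) m) by
      exact H (psize lam) lam le_rfl
    intro n
    induction n with
    | zero =>
      intro l hl
      rcases Set.eq_empty_or_nonempty (USet e (betaSet l m)) with hUe | hUn
      · exact hdone l hUe
      · obtain ⟨mu0, _, hlt⟩ := key e he m l hUn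
        omega
    | succ n ih =>
      intro l hl
      rcases Set.eq_empty_or_nonempty (USet e (betaSet l m)) with hUe | hUn
      · exact hdone l hUe
      · obtain ⟨mu0, hd0, hlt⟩ := key e he m l hUn
        obtain ⟨N', f', hf0, hstep, hUe', hcl⟩ := ih mu0 (by omega)
        refine ⟨N' + 1, fun k => if k = 0 then l else f' (k - 1), rfl, ?_, ?_, ?_⟩
        · intro k hk
          by_cases hk0 : k = 0
          · subst hk0
            show DownStep e m l (f' 0)
            rw [hf0]
            exact hd0
          · simp only [if_neg hk0, if_neg (by omega : k + 1 ≠ 0)]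
            have hs := hstep (k - 1) (by omega)
            rw [show k - 1 + 1 = k by omega] at hs
            rw [show k + 1 - 1 = k by omega]
            exact hs
        · simp only [if_neg (by omega : N' + 1 ≠ 0), show N' + 1 - 1 = N' from rfl]
          exact hUe'
        · simp only [if_neg (by omega : N' + 1 ≠ 0), show N' + 1 - 1 = N' from rfl]
          exact hcl
end

section
/- Let λ be an e-restricted partition with beta-number set J of charge m, and let i be a residue with M_i(λ) ≤ M_{i+1}(λ), where M_j(λ) = max{x ∈ J : x ≡ j (mod e)}. Then after one down operation, M_i(down(λ)) ≤ M_{i+1}(down(λ)). Consequently, iterating, the e-core base(λ) satisfies M_i(base(λ)) ≤ M_{i+1}(base(λ)), i.e. base(λ) has no addable i-node (so s_i·base(λ) ⊆ base(λ)). -/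
/-- Row `a` (0-indexed) of `l` admits an addable node at its end. -/
def addableRow (l : Partition') (a : ℕ) : Prop :=
  a = 0 ∨ l.parts a < l.parts (a - 1)

/-- Row `a` (0-indexed) of `l` has a removable node at its end. -/
def removableRow (l : Partition') (a : ℕ) : Prop :=
  l.parts (a + 1) < l.parts a

/-- The set of rows of `l` carrying an addable node of residue `i`
(the node at row `a`, column `l.parts a`, 0-indexed, has residue
`m + l.parts a - a` modulo `e`). -/
def AddRows (e : ℕ) (m : ℤ) (i : ZMod e) (l : Partition') : Set ℕ :=
  {a | addableRow l a ∧ ((m + (l.parts a : ℤ) - (a : ℤ) : ℤ) : ZMod e) = i}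

/-- The set of rows of `l` carrying a removable node of residue `i`. -/
def RemRows (e : ℕ) (m : ℤ) (i : ZMod e) (l : Partition') : Set ℕ :=
  {a | removableRow l a ∧ ((m + (l.parts a : ℤ) - 1 - (a : ℤ) : ℤ) : ZMod e) = i}

/-- One application of the up operation, as a relation on partitions. -/
def UpStep (e : ℕ) (m : ℤ) (l l' : Partition') : Prop :=
  ∃ p q : ℤ,
    IsGreatest (USet e (betaSet l m)) p ∧
    IsLeast {x : ℤ | p < x ∧ ¬ ((e : ℤ) ∣ (x - p)) ∧
      x - (e : ℤ) ∈ betaSet l m ∧ x ∉ betaSet l m} q ∧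
    betaSet l' m = (betaSet l m \ {p}) ∪ {q}

/-- `r` is the e-core `roof(l)`, obtained by iterating the up operation
until no bead can be slid up. -/
def RoofOf (e : ℕ) (m : ℤ) (l r : Partition') : Prop :=
  ∃ (N : ℕ) (f : ℕ → Partition'), f 0 = l ∧ f N = r ∧
    (∀ k < N, UpStep e m (f k) (f (k + 1))) ∧
    USet e (betaSet r m) = ∅

/-- `b` is the e-core `base(l)`, obtained by iterating the down operation
until no bead can be slid up. -/
def BaseOf (e : ℕ) (m : ℤ) (l b : Partition') : Prop :=
  ∃ (N : ℕ) (f : ℕ → Partition'), f 0 = l ∧ f N = b ∧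
    (∀ k < N, DownStep e m (f k) (f (k + 1))) ∧
    USet e (betaSet b m) = ∅


section Aux

variable {e : ℕ} {m : ℤ}

lemma res_sub_e (e : ℕ) (x : ℤ) : ((x - (e:ℕ) : ℤ) : ZMod e) = (x : ZMod e) := by
  push_cast
  simp

lemma res_add_e (e : ℕ) (x : ℤ) : ((x + (e:ℕ) : ℤ) : ZMod e) = (x : ZMod e) := by
  push_cast
  simp

lemma i_ne_i_add_one (e : ℕ) (he : 2 ≤ e) (i : ZMod e) : i ≠ i + 1 := by
  intro h
  have h1 : (1 : ZMod e) = 0 := by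
    have h2 : i + 1 = i + 0 := by simpa using h.symm
    simpa using (add_left_cancel h2)
  haveI : NeZero e := ⟨by omega⟩
  have h2 : ((1:ℕ) : ZMod e) = 0 := by exact_mod_cast h1
  have h3 := Nat.le_of_dvd one_pos ((ZMod.natCast_eq_zero_iff 1 e).1 h2)
  omega

lemma betaSet_strictAnti (l : Partition') (m : ℤ) :
    StrictAnti (fun k : ℕ => (l.parts k : ℤ) + m - k) := by
  apply strictAnti_nat_of_succ_lt
  intro k
  have := l.antitone k
  have : (l.parts (k+1) : ℤ) ≤ l.parts k := by exact_mod_cast this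
  push_cast
  omega

lemma exists_greatest_runner (e : ℕ) (he : 2 ≤ e) (l : Partition') (m : ℤ) (j : ZMod e) :
    ∃ M : ℤ, IsGreatest {x ∈ betaSet l m | (x : ZMod e) = j} M := by
  haveI : NeZero e := ⟨by omega⟩
  obtain ⟨N, hN⟩ := l.eventually_zero
  have hmono : Antitone l.parts := antitone_nat_of_succ_le l.antitone
  have hbdd : ∃ b : ℤ, ∀ z : ℤ, z ∈ {x ∈ betaSet l m | (x : ZMod e) = j} → z ≤ b := by
    refine ⟨(l.parts 0 : ℤ) + m, ?_⟩
    rintro z ⟨⟨k, rfl⟩, -⟩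
    have h1 : (l.parts k : ℤ) ≤ l.parts 0 := by exact_mod_cast hmono (Nat.zero_le k)
    have h2 : (0:ℤ) ≤ k := Int.natCast_nonneg k
    omega
  have hinh : ∃ z : ℤ, z ∈ {x ∈ betaSet l m | (x : ZMod e) = j} := by
    set t : ℕ := ((m : ZMod e) - (N : ZMod e) - j).val with ht
    refine ⟨m - (N + t : ℕ), ⟨N + t, ?_⟩, ?_⟩
    · rw [hN (N + t) (Nat.le_add_right _ _)]
      push_cast
      ring
    · have hval : ((t : ℕ) : ZMod e) = (m : ZMod e) - (N : ZMod e) - j := by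
        rw [ht]
        exact (ZMod.natCast_val _).trans (ZMod.cast_id _ _)
      push_cast
      rw [hval]
      ring
  obtain ⟨M, hM1, hM2⟩ := Int.exists_greatest_of_bdd hbdd hinh
  exact ⟨M, hM1, hM2⟩

/-- Core lemma: one down step preserves `M_i ≤ M_{i+1}`. -/
lemma downstep_mono (e : ℕ) (he : 2 ≤ e) (m : ℤ) (i : ZMod e) (l l' : Partition')
    (Mi Mi1 : ℤ)
    (hMi : IsGreatest {x ∈ betaSet l m | (x : ZMod e) = i} Mi)
    (hMi1 : IsGreatest {x ∈ betaSet l m | (x : ZMod e) = i + 1} Mi1)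
    (hle : Mi ≤ Mi1)
    (hstep : DownStep e m l l')
    (Mi' Mi1' : ℤ)
    (hMi' : IsGreatest {x ∈ betaSet l' m | (x : ZMod e) = i} Mi')
    (hMi1' : IsGreatest {x ∈ betaSet l' m | (x : ZMod e) = i + 1} Mi1') :
    Mi' ≤ Mi1' := by
  haveI : NeZero e := ⟨by omega⟩
  obtain ⟨p, q, hp, hq, hJ⟩ := hstep
  have he' : (2 : ℤ) ≤ (e : ℕ) := by exact_mod_cast he
  have hpJ : p ∈ betaSet l m := hp.1.1
  have hpeJ : p - (e:ℕ) ∉ betaSet l m := hp.1.2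
  -- F1 : everything in J below p has its shift down in J
  have F1 : ∀ y ∈ betaSet l m, y < p → y - (e:ℕ) ∈ betaSet l m := by
    intro y hy hlt
    by_contra h
    exact absurd (hp.2 ⟨hy, h⟩) (not_le.2 hlt)
  -- q ≤ p
  have F2 : q ≤ p := hq.2 (Or.inr rfl)
  -- q ∈ J
  have F3 : q ∈ betaSet l m := by
    rcases hq.1 with h | h
    · exact h.2.1
    · rw [Set.mem_singleton_iff] at h; rw [h]; exact hpJ
  -- p - e < q
  have F6 : p - (e:ℕ) < q := by
    rcases hq.1 with h | h
    · exact h.1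
    · rw [Set.mem_singleton_iff] at h; omega
  -- F4 : minimality of q
  have F4 : ∀ x ∈ betaSet l m, p - (e:ℕ) < x → x < q → x + (e:ℕ) ∈ betaSet l m := by
    intro x hx h1 h2
    by_contra hxe
    exact absurd (hq.2 (Or.inl ⟨h1, hx, hxe⟩)) (not_le.2 h2)
  have hne : Mi ≠ Mi1 := by
    intro h
    apply i_ne_i_add_one e he i
    rw [← hMi1.1.2, ← hMi.1.2, h]
  have hlt : Mi < Mi1 := lt_of_le_of_ne hle hne
  -- Mi' ≤ Mi
  have hMi'le : Mi' ≤ Mi := by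
    obtain ⟨hmem, hres⟩ := hMi'.1
    rw [hJ] at hmem
    rcases hmem with ⟨hJm, -⟩ | hsing
    · exact hMi.2 ⟨hJm, hres⟩
    · rw [Set.mem_singleton_iff] at hsing
      have hpres : (p : ZMod e) = i := by
        rw [← res_sub_e e p, ← hsing]
        exact hres
      have := hMi.2 ⟨hpJ, hpres⟩
      omega
  -- Mi ≤ Mi1'
  have key : Mi ≤ Mi1' := by
    by_cases hcase : q = Mi1
    · -- the removed bead is the top of runner i+1
      by_cases hb : Mi ≤ Mi1 - (e:ℕ)
      · -- witness Mi1 - e on runner i+1 survives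
        have hwres : ((Mi1 - (e:ℕ) : ℤ) : ZMod e) = i + 1 := by
          rw [res_sub_e e Mi1]; exact hMi1.1.2
        have hwmem : Mi1 - (e:ℕ) ∈ betaSet l' m := by
          rw [hJ]
          rcases lt_or_eq_of_le F2 with hqp | hqp
          · left
            refine ⟨?_, ?_⟩
            · have := F1 q F3 hqp
              rw [hcase] at this
              exact this
            · rw [Set.mem_singleton_iff, hcase]
              omega
          · right
            rw [Set.mem_singleton_iff, ← hqp, hcase]
        have := hMi1'.2 ⟨hwmem, hwres⟩
        omega
      · -- impossible: then Mi = Mi1 - 1 which leads to a contradiction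
        exfalso
        push_neg at hb
        -- Mi ≡ Mi1 - 1 (mod e) and Mi1 - e < Mi < Mi1, so Mi = Mi1 - 1
        have h0 : ((Mi - Mi1 + 1 : ℤ) : ZMod e) = 0 := by
          push_cast
          rw [hMi.1.2, hMi1.1.2]
          ring
        have hdvd : ((e:ℕ) : ℤ) ∣ (Mi - Mi1 + 1) :=
          (ZMod.intCast_zmod_eq_zero_iff_dvd _ e).1 h0
        have hz : Mi - Mi1 + 1 = 0 := Int.eq_zero_of_abs_lt_dvd hdvd (by
          rw [abs_lt]; omega)
        have hMiq : Mi = Mi1 - 1 := by omega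
        -- Mi1 > p - e, so Mi = Mi1 - 1 ≥ p - e
        have hq6 : p - (e:ℕ) < Mi1 := hcase ▸ F6
        rcases eq_or_lt_of_le (show p - (e:ℕ) ≤ Mi by omega) with hMeq | hMgt
        · exact hpeJ (hMeq ▸ hMi.1.1)
        · have hup := F4 Mi hMi.1.1 hMgt (by rw [hcase]; omega)
          have hupres : ((Mi + (e:ℕ) : ℤ) : ZMod e) = i := by
            rw [res_add_e e Mi]; exact hMi.1.2
          have := hMi.2 ⟨hup, hupres⟩
          omega
    · -- the top of runner i+1 survives
      have hmem : Mi1 ∈ betaSet l' m := by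
        rw [hJ]
        left
        exact ⟨hMi1.1.1, by rw [Set.mem_singleton_iff]; exact fun h => hcase h.symm⟩
      have := hMi1'.2 ⟨hmem, hMi1.1.2⟩
      omega
  omega

end Aux

/-- Lemma 8.2(1): if `M_i(λ) ≤ M_{i+1}(λ)` (largest beta numbers on the
runners of residues `i` and `i+1`), then the same inequality holds after one
down operation; consequently it holds for the `e`-core `base(λ)`, which
therefore has no addable `i`-node. -/
theorem M_monotone_under_down (e : ℕ) (he : 2 ≤ e) (m : ℤ) (i : ZMod e)
    (lam mu beta : Partition') (hres : eRestricted e lam)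
    (Mi Mi1 : ℤ)
    (hMi : IsGreatest {x ∈ betaSet lam m | (x : ZMod e) = i} Mi)
    (hMi1 : IsGreatest {x ∈ betaSet lam m | (x : ZMod e) = i + 1} Mi1)
    (hle : Mi ≤ Mi1)
    (hstep : DownStep e m lam mu)
    (Mi' Mi1' : ℤ)
    (hMi' : IsGreatest {x ∈ betaSet mu m | (x : ZMod e) = i} Mi')
    (hMi1' : IsGreatest {x ∈ betaSet mu m | (x : ZMod e) = i + 1} Mi1')
    (hbase : BaseOf e m lam beta)
    (Mbi Mbi1 : ℤ)
    (hMbi : IsGreatest {x ∈ betaSet beta m | (x : ZMod e) = i} Mbi)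
    (hMbi1 : IsGreatest {x ∈ betaSet beta m | (x : ZMod e) = i + 1} Mbi1) :
    Mi' ≤ Mi1' ∧ Mbi ≤ Mbi1 ∧ AddRows e m i beta = ∅ := by
  haveI : NeZero e := ⟨by omega⟩
  have part1 : Mi' ≤ Mi1' :=
    downstep_mono e he m i lam mu Mi Mi1 hMi hMi1 hle hstep Mi' Mi1' hMi' hMi1'
  obtain ⟨N, f, hf0, hfN, hfstep, hUempty⟩ := hbase
  have hP : ∀ k, k ≤ N → ∀ A B : ℤ,
      IsGreatest {x ∈ betaSet (f k) m | (x : ZMod e) = i} A →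
      IsGreatest {x ∈ betaSet (f k) m | (x : ZMod e) = i + 1} B → A ≤ B := by
    intro k
    induction k with
    | zero =>
      intro _ A B hA hB
      rw [hf0] at hA hB
      rw [hA.unique hMi, hB.unique hMi1]
      exact hle
    | succ k ih =>
      intro hk A B hA hB
      obtain ⟨A0, hA0⟩ := exists_greatest_runner e he (f k) m i
      obtain ⟨B0, hB0⟩ := exists_greatest_runner e he (f k) m (i + 1)
      exact downstep_mono e he m i (f k) (f (k+1)) A0 B0 hA0 hB0
        (ih (by omega) A0 B0 hA0 hB0) (hfstep k (by omega)) A B hA hB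
  have part2 : Mbi ≤ Mbi1 := by
    apply hP N le_rfl Mbi Mbi1 <;> rw [hfN] <;> assumption
  refine ⟨part1, part2, ?_⟩
  -- the base has no addable i-node
  have hclosed : ∀ x ∈ betaSet beta m, x - (e:ℕ) ∈ betaSet beta m := by
    intro x hx
    by_contra h
    have hx2 : x ∈ USet e (betaSet beta m) := ⟨hx, h⟩
    rw [hUempty] at hx2
    exact hx2
  have hray : ∀ t : ℕ, Mbi1 - (e:ℕ) * t ∈ betaSet beta m := by
    intro t
    induction t with
    | zero => simpa using hMbi1.1.1
    | succ t ih =>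
      have h2 : Mbi1 - ((e:ℕ):ℤ) * ((t+1 : ℕ):ℤ) = (Mbi1 - (e:ℕ) * t) - (e:ℕ) := by
        push_cast; ring
      rw [h2]
      exact hclosed _ ih
  have hMblt : Mbi < Mbi1 := by
    rcases lt_or_eq_of_le part2 with h | h
    · exact h
    · exfalso
      apply i_ne_i_add_one e he i
      rw [← hMbi1.1.2, ← hMbi.1.2, h]
  rw [Set.eq_empty_iff_forall_notMem]
  rintro a ⟨hadd, hres⟩
  set x : ℤ := (beta.parts a : ℤ) + m - a with hxdef
  have hxJ : x ∈ betaSet beta m := ⟨a, rfl⟩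
  have hxres : (x : ZMod e) = i := by
    have hx2 : x = m + (beta.parts a : ℤ) - a := by rw [hxdef]; ring
    rw [hx2]
    exact hres
  have hxle : x ≤ Mbi := hMbi.2 ⟨hxJ, hxres⟩
  have hdvd : ((e:ℕ) : ℤ) ∣ (Mbi1 - (x+1)) := by
    apply (ZMod.intCast_zmod_eq_zero_iff_dvd _ e).1
    push_cast
    rw [hMbi1.1.2, hxres]
    ring
  obtain ⟨c, hc⟩ := hdvd
  have hc0 : 0 ≤ c := by
    by_contra hcneg
    push_neg at hcneg
    have hneg : ((e:ℕ):ℤ) * c < 0 :=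
      mul_neg_of_pos_of_neg (by exact_mod_cast (by omega : 0 < e)) hcneg
    omega
  obtain ⟨t, rfl⟩ := Int.eq_ofNat_of_zero_le hc0
  have hx1 : x + 1 ∈ betaSet beta m := by
    have h3 : x + 1 = Mbi1 - ((e:ℕ):ℤ) * ((t:ℕ):ℤ) := by
      have := hc
      push_cast at this ⊢
      linarith
    rw [h3]
    exact hray t
  obtain ⟨k, hk⟩ := hx1
  have hsa := betaSet_strictAnti beta m
  have hklt : k < a := by
    have h4 : (fun k : ℕ => (beta.parts k : ℤ) + m - k) a
        < (fun k : ℕ => (beta.parts k : ℤ) + m - k) k := by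
      show (beta.parts a : ℤ) + m - a < (beta.parts k : ℤ) + m - k
      omega
    exact (StrictAnti.lt_iff_gt hsa).1 h4
  rcases hadd with h0 | hstep2
  · omega
  · obtain ⟨b, rfl⟩ : ∃ b, a = b + 1 := ⟨a - 1, by omega⟩
    have hstep3 : beta.parts (b+1) < beta.parts b := by simpa using hstep2
    have hkb : k ≤ b := by omega
    have h5 : (beta.parts b : ℤ) + m - b ≤ (beta.parts k : ℤ) + m - k := by
      simpa using hsa.antitone hkb
    omega
end
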